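/- Let g be a submodular function on subsets of a finite ground set X̄, and X_t ⊆ X̄. Define g̃_2(X) = g(X_t) − Σ_{j ∈ X_t \ X} g(j | X̄ \ {j}) + Σ_{j ∈ X \ X_t} g(j | X_t). Then g̃_2(X_t) = g(X_t) and g(X) ≤ g̃_2(X) for every X ⊆ X̄. -/
import Mathlib

lemma stmt_11_aux1 {ι : Type*} [DecidableEq ι] (g : Finset ι → ℝ)
    (hsub : ∀ A B : Finset ι, A ⊆ B → ∀ j ∉ B,
      g (insert j B) - g B ≤ g (insert j A) - g A)
    (A : Finset ι) :
    ∀ T : Finset ι, Disjoint T A →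
      g (A ∪ T) ≤ g A + ∑ j ∈ T, (g (insert j A) - g A) := by
  intro T
  induction T using Finset.induction_on with
  | empty => simp
  | @insert a T' ha ih =>
    intro hd
    have hd' : Disjoint T' A := (Finset.disjoint_insert_left.mp hd).2
    have haA : a ∉ A := (Finset.disjoint_insert_left.mp hd).1
    have haAT : a ∉ A ∪ T' := by simp [haA, ha]
    have h1 : g (insert a (A ∪ T')) - g (A ∪ T') ≤ g (insert a A) - g A :=
      hsub A (A ∪ T') Finset.subset_union_left a haAT
    have h2 := ih hd'
    rw [Finset.union_insert] at *
    rw [Finset.sum_insert ha]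
    linarith

lemma stmt_11_aux2 {ι : Type*} [DecidableEq ι] (Xbar : Finset ι) (g : Finset ι → ℝ)
    (hsub : ∀ A B : Finset ι, A ⊆ B → ∀ j ∉ B,
      g (insert j B) - g B ≤ g (insert j A) - g A)
    (X : Finset ι) :
    ∀ T : Finset ι, Disjoint T X → X ∪ T ⊆ Xbar →
      g X + ∑ j ∈ T, (g Xbar - g (Xbar.erase j)) ≤ g (X ∪ T) := by
  intro T
  induction T using Finset.induction_on with
  | empty => simp
  | @insert a T' ha ih =>
    intro hd hsubset
    have hd' : Disjoint T' X := (Finset.disjoint_insert_left.mp hd).2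
    have haX : a ∉ X := (Finset.disjoint_insert_left.mp hd).1
    have haXT : a ∉ X ∪ T' := by simp [haX, ha]
    rw [Finset.union_insert] at hsubset
    have hXT : X ∪ T' ⊆ Xbar.erase a := by
      intro x hx
      refine Finset.mem_erase.mpr ⟨?_, hsubset (Finset.mem_insert_of_mem hx)⟩
      rintro rfl; exact haXT hx
    have haXbar : a ∈ Xbar := hsubset (Finset.mem_insert_self a _)
    have h1 : g (insert a (Xbar.erase a)) - g (Xbar.erase a)
        ≤ g (insert a (X ∪ T')) - g (X ∪ T') :=
      hsub (X ∪ T') (Xbar.erase a) hXT a (Finset.notMem_erase a Xbar)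
    rw [Finset.insert_erase haXbar] at h1
    have h2 := ih hd' (hXT.trans (Finset.erase_subset a Xbar))
    rw [Finset.union_insert, Finset.sum_insert ha]
    linarith

theorem stmt_11 {ι : Type*} [DecidableEq ι] (Xbar : Finset ι) (g : Finset ι → ℝ)
    (hsub : ∀ A B : Finset ι, A ⊆ B → ∀ j ∉ B,
      g (insert j B) - g B ≤ g (insert j A) - g A)
    (Xt : Finset ι) (hXt : Xt ⊆ Xbar)
    (gtilde : Finset ι → ℝ)
    (hgtilde : ∀ X : Finset ι,
      gtilde X = g Xt - (∑ j ∈ Xt \ X, (g Xbar - g (Xbar.erase j)))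
        + ∑ j ∈ X \ Xt, (g (insert j Xt) - g Xt)) :
    gtilde Xt = g Xt ∧ ∀ X ⊆ Xbar, g X ≤ gtilde X := by
  constructor
  · rw [hgtilde]; simp
  · intro X hX
    rw [hgtilde]
    have h1 := stmt_11_aux2 Xbar g hsub X (Xt \ X) Finset.sdiff_disjoint (by
        rw [Finset.union_sdiff_self_eq_union]
        exact Finset.union_subset hX hXt)
    have h2 := stmt_11_aux1 g hsub Xt (X \ Xt) Finset.sdiff_disjoint
    rw [Finset.union_sdiff_self_eq_union] at h1 h2
    rw [Finset.union_comm Xt X] at h2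
    linarith
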